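/- If f is a set function on a finite set V that is an expectation (a finite convex combination) of functions of the form S ↦ |IBS_ω(S)| where each IBS_ω is the influence blocking set in some live-path graph with a common negative seed set N₀, then f is monotone and submodular on subsets of V \ N₀. -/

import Mathlib

variable {V : Type*}

/-- There is a walk of length `n` (number of edges) from `u` to `w` along relation `E`. -/
inductive PathLen (E : V → V → Prop) : V → V → ℕ → Prop
  | refl (v : V) : PathLen E v v 0
  | tail {u v w : V} {n : ℕ} : PathLen E u v n → E v w → PathLen E u w (n + 1)

/-- Shortest-path distance (number of edges) from the set `S` to `v` along edges `E`,
`⊤` if no path exists. -/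
noncomputable def eDist (E : V → V → Prop) (S : Set V) (v : V) : ℕ∞ :=
  sInf {n : ℕ∞ | ∃ m : ℕ, n = (m : ℕ∞) ∧ ∃ s ∈ S, PathLen E s v m}

/-- An edge relation is "live-path" if every vertex has at most one in-edge. -/
def LivePathRel (E : V → V → Prop) : Prop :=
  ∀ ⦃u u' v : V⦄, E u v → E u' v → u = u'

/-- `l` is a path (list of successive vertices) along `E` from `s` to `v`. -/
def IsPathFrom (E : V → V → Prop) (l : List V) (s v : V) : Prop :=
  l.Chain' E ∧ l.head? = some s ∧ l.getLast? = some v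

/-- `l` is a shortest path along `E` from the set `S` to `v`:
it starts at some node of `S`, ends at `v`, and its number of edges equals `eDist E S v`. -/
def IsShortestPath (E : V → V → Prop) (S : Set V) (v : V) (l : List V) : Prop :=
  (∃ s ∈ S, IsPathFrom E l s v) ∧ (l.length : ℕ∞) = eDist E S v + 1

/-- `v` is negatively activated (-active) under positive seeds `S` and negative seeds `N₀`. -/
def NegActive (pos neg : V → V → Prop) (N₀ S : Set V) (v : V) : Prop :=
  eDist neg N₀ v < ⊤ ∧ eDist neg N₀ v ≤ eDist pos S v

/-- Influence blocking set: vertices -active with empty positive seed set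
but not -active with positive seed set `S`. -/
def IBS (pos neg : V → V → Prop) (N₀ S : Set V) : Set V :=
  {v | NegActive pos neg N₀ ∅ v ∧ ¬ NegActive pos neg N₀ S v}

/-
With `S = ∅` the positive distance is `⊤`, so `v ∈ IBS(S)` just says that the negative cascade
reaches `v`, but the positive one from `S` reaches it strictly earlier. Distances from a union of
seed sets are minima, so `IBS(S ∪ T) = IBS(S) ∪ IBS(T)`: each `S ↦ |IBS_ω(S)|` is a coverage
function, hence monotone and submodular, and both properties survive nonnegative combinations.
-/

lemma eDist_union (E : V → V → Prop) (A B : Set V) (v : V) :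
    eDist E (A ∪ B) v = eDist E A v ⊓ eDist E B v := by
  rw [eDist, eDist, eDist, ← sInf_union]
  congr 1
  ext m
  simp only [Set.mem_union, Set.mem_ofPred_eq, or_and_right, exists_or, and_or_left]

lemma eDist_empty (E : V → V → Prop) (v : V) : eDist E ∅ v = ⊤ := by
  simp [eDist]

lemma IBS_eq_setOf (pos neg : V → V → Prop) (N₀ S : Set V) :
    IBS pos neg N₀ S = {v | eDist neg N₀ v < ⊤ ∧ eDist pos S v < eDist neg N₀ v} := by
  ext v
  simp only [IBS, NegActive, Set.mem_ofPred_eq, eDist_empty, le_top, and_true, not_and, not_le]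
  tauto

lemma IBS_union (pos neg : V → V → Prop) (N₀ S T : Set V) :
    IBS pos neg N₀ (S ∪ T) = IBS pos neg N₀ S ∪ IBS pos neg N₀ T := by
  ext v
  simp only [IBS_eq_setOf, eDist_union, inf_lt_iff, Set.mem_union, Set.mem_ofPred_eq]
  tauto

lemma IBS_mono (pos neg : V → V → Prop) (N₀ : Set V) : Monotone (IBS pos neg N₀) := by
  intro S T hST
  rw [← Set.union_eq_self_of_subset_left hST, IBS_union]
  exact Set.subset_union_left

lemma Set.ncard_union_add_ncard_le_of_subset {α : Type*} {A B : Set α} (X : Set α) (hAB : A ⊆ B)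
    (hB : B.Finite) (hX : X.Finite) :
    (B ∪ X).ncard + A.ncard ≤ (A ∪ X).ncard + B.ncard := by
  have hA : A.Finite := hB.subset hAB
  have hunionB := Set.ncard_union_add_ncard_inter B X hB hX
  have hunionA := Set.ncard_union_add_ncard_inter A X hA hX
  have hinter : (A ∩ X).ncard ≤ (B ∩ X).ncard :=
    Set.ncard_le_ncard (Set.inter_subset_inter_left X hAB) (hB.inter_of_left X)
  omega

theorem stmt8_general [Fintype V] (N₀ : Set V) (n : ℕ)
    (pos neg : Fin n → V → V → Prop)
    (c : Fin n → ℝ) (hc : ∀ i, 0 ≤ c i)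
    (f : Set V → ℝ)
    (hf : ∀ S : Set V, f S = ∑ i, c i * ((IBS (pos i) (neg i) N₀ S).ncard : ℝ)) :
    (∀ S T : Set V, S ⊆ T → T ⊆ {v | v ∉ N₀} → f S ≤ f T) ∧
    (∀ S T : Set V, S ⊆ T → T ⊆ {v | v ∉ N₀} → ∀ x, x ∉ T → x ∉ N₀ →
      f (T ∪ {x}) - f T ≤ f (S ∪ {x}) - f S) := by
  constructor
  · intro S T hST _
    rw [hf S, hf T]
    refine Finset.sum_le_sum fun i _ => mul_le_mul_of_nonneg_left ?_ (hc i)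
    exact_mod_cast Set.ncard_le_ncard (IBS_mono (pos i) (neg i) N₀ hST) (Set.toFinite _)
  · intro S T hST _ x _ _
    rw [hf S, hf T, hf (S ∪ {x}), hf (T ∪ {x}), sub_le_sub_iff, ← Finset.sum_add_distrib,
      ← Finset.sum_add_distrib]
    refine Finset.sum_le_sum fun i _ => ?_
    rw [← mul_add, ← mul_add, IBS_union, IBS_union]
    refine mul_le_mul_of_nonneg_left ?_ (hc i)
    exact_mod_cast Set.ncard_union_add_ncard_le_of_subset _
      (IBS_mono (pos i) (neg i) N₀ hST) (Set.toFinite _) (Set.toFinite _)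

/-- A finite convex combination (expectation) of the functions `S ↦ |IBS_ω(S)|` over
live-path graphs `ω` with common negative seed set `N₀` is monotone and submodular on
subsets of `V \ N₀`. -/
theorem stmt8 [Fintype V] (N₀ : Set V) (n : ℕ)
    (pos neg : Fin n → V → V → Prop)
    (hpos : ∀ i, LivePathRel (pos i)) (hneg : ∀ i, LivePathRel (neg i))
    (c : Fin n → ℝ) (hc : ∀ i, 0 ≤ c i) (hc1 : ∑ i, c i = 1)
    (f : Set V → ℝ)
    (hf : ∀ S : Set V, f S = ∑ i, c i * ((IBS (pos i) (neg i) N₀ S).ncard : ℝ)) :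
    (∀ S T : Set V, S ⊆ T → T ⊆ {v | v ∉ N₀} → f S ≤ f T) ∧
    (∀ S T : Set V, S ⊆ T → T ⊆ {v | v ∉ N₀} → ∀ x, x ∉ T → x ∉ N₀ →
      f (T ∪ {x}) - f T ≤ f (S ∪ {x}) - f S) :=
  stmt8_general N₀ n pos neg c hc f hf
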